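/- k-abelian equivalence is a congruence: if u ∼_k u' and v ∼_k v', then uv ∼_k u'v'. -/

import Mathlib

/-- Number of occurrences of `w` as a (contiguous) factor of `u`. -/
def occ {A : Type*} [DecidableEq A] (w u : List A) : ℕ :=
  ((Finset.range (u.length + 1 - w.length)).filter
    (fun i => (u.drop i).take w.length = w)).card

/-- `k`-abelian equivalence. -/
def KAbelianEq {A : Type*} [DecidableEq A] (k : ℕ) (u v : List A) : Prop :=
  ∀ w : List A, w ≠ [] → w.length ≤ k → occ w u = occ w v

/-!
The occurrences of `w` in `u ++ v` that lie neither inside `u` nor inside `v` are exactly the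
occurrences of `w` in `s ++ p`, where `s` is the suffix of `u` and `p` the prefix of `v` of length
`|w| - 1`. It therefore suffices that `k`-abelian equivalent words have the same prefixes and the
same suffixes of length `k - 1`. For prefixes this is read off the identity
`|u|_x = ∑ₐ |u|_{ax} + [x is a prefix of u]`; for suffixes it follows by reversing the words,
which preserves all factor counts.
-/

theorem List.take_drop_reverse {α : Type*} {l : List α} {i m : ℕ} (h : i + m ≤ l.length) :
    (l.reverse.drop i).take m = ((l.drop (l.length - m - i)).take m).reverse := by
  rw [List.drop_reverse, List.take_reverse, List.drop_take, List.length_take]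
  congr 3 <;> omega

theorem List.prefix_append_take_iff {α : Type*} {w x v : List α} {n : ℕ}
    (h : w.length ≤ x.length + n) : w <+: x ++ v.take n ↔ w <+: x ++ v := by
  rw [List.prefix_iff_eq_take, List.prefix_iff_eq_take, List.take_append, List.take_append,
    List.take_take, Nat.min_eq_left (by omega)]

section

variable {A : Type*} [DecidableEq A]

open Finset

theorem occ_eq_card_filter_isPrefix (w u : List A) :
    occ w u = #{i ∈ range (u.length + 1) | w <+: u.drop i} := by
  rw [occ]
  congr 1
  ext i
  simp only [mem_filter, mem_range, List.prefix_iff_eq_take (l₁ := w), eq_comm (a := w)]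
  constructor
  · rintro ⟨hi, h⟩
    exact ⟨by omega, h⟩
  · rintro ⟨hi, h⟩
    have := congrArg List.length h
    simp only [List.length_take, List.length_drop] at this
    exact ⟨by omega, h⟩

theorem occ_nil_right (w : List A) : occ w [] = if w = [] then 1 else 0 := by
  rw [occ_eq_card_filter_isPrefix]
  split_ifs with hw <;> simp [hw]

theorem occ_cons (w : List A) (a : A) (u : List A) :
    occ w (a :: u) = (if w <+: a :: u then 1 else 0) + occ w u := by
  rw [occ_eq_card_filter_isPrefix, occ_eq_card_filter_isPrefix, card_filter, card_filter,
    List.length_cons, sum_range_succ', add_comm]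
  simp

theorem occ_eq_zero_of_length_lt {w u : List A} (h : u.length < w.length) : occ w u = 0 := by
  simp [occ, Nat.sub_eq_zero_of_le h]

theorem occ_reverse (w u : List A) : occ w.reverse u.reverse = occ w u := by
  simp only [occ, List.length_reverse]
  refine card_nbij' (fun i => u.length - w.length - i) (fun i => u.length - w.length - i)
    ?_ ?_ ?_ ?_
  all_goals intro i hi
  all_goals simp only [coe_filter, mem_range, Set.mem_ofPred_eq] at hi ⊢
  · rw [List.take_drop_reverse (by omega), List.reverse_inj] at hi
    exact ⟨by omega, hi.2⟩
  · rw [List.take_drop_reverse (by omega), List.reverse_inj]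
    refine ⟨by omega, ?_⟩
    convert hi.2 using 3
    omega
  · omega
  · omega

theorem occ_append_eq_occ_append_take_add {w : List A} (hw : w ≠ []) (v : List A) :
    ∀ u : List A, occ w (u ++ v) = occ w (u ++ v.take (w.length - 1)) + occ w v
  | [] => by
    have : (v.take (w.length - 1)).length < w.length :=
      (List.length_take_le _ _).trans_lt (Nat.sub_lt (List.length_pos_iff.2 hw) one_pos)
    rw [List.nil_append, List.nil_append, occ_eq_zero_of_length_lt this, zero_add]
  | a :: u => by
    have hpre : w <+: a :: u ++ v.take (w.length - 1) ↔ w <+: a :: u ++ v :=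
      List.prefix_append_take_iff (by simp only [List.length_cons]; omega)
    rw [List.cons_append, List.cons_append, occ_cons, occ_cons,
      occ_append_eq_occ_append_take_add hw v u, ← List.cons_append, ← List.cons_append]
    simp only [hpre, add_assoc]

theorem occ_append_eq_add_occ_rtake_append {w : List A} (hw : w ≠ []) (u v : List A) :
    occ w (u ++ v) = occ w u + occ w (u.rtake (w.length - 1) ++ v) := by
  have hrev := occ_append_eq_occ_append_take_add (w := w.reverse) (by simpa) u.reverse v.reverse
  rw [List.length_reverse, ← List.reverse_append, occ_reverse, occ_reverse] at hrev
  rw [hrev, add_comm, ← occ_reverse w (u.rtake _ ++ v), List.reverse_append,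
    List.rtake_eq_reverse_take_reverse, List.reverse_reverse]

theorem occ_append {w : List A} (hw : w ≠ []) (u v : List A) :
    occ w (u ++ v) =
      occ w u + occ w (u.rtake (w.length - 1) ++ v.take (w.length - 1)) + occ w v := by
  rw [occ_append_eq_add_occ_rtake_append hw, occ_append_eq_occ_append_take_add hw, add_assoc]

-- Every occurrence of `x` in `u` other than at position `0` extends one letter to the left.
theorem occ_eq_sum_occ_cons_add (x : List A) {T : Finset A} :
    ∀ u : List A, (∀ a ∈ u, a ∈ T) →
      occ x u = ∑ a ∈ T, occ (a :: x) u + if x <+: u then 1 else 0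
  | [], _ => by simp [occ_nil_right]
  | b :: u, hT => by
    have hb : b ∈ T := hT b List.mem_cons_self
    have hsum : (∑ a ∈ T, if a :: x <+: b :: u then 1 else 0) = if x <+: u then 1 else 0 := by
      by_cases hxu : x <+: u <;> simp [hxu, hb]
    rw [occ_cons, occ_eq_sum_occ_cons_add x u fun a ha => hT a (List.mem_cons_of_mem b ha)]
    simp only [occ_cons, sum_add_distrib, hsum]
    omega

variable {k : ℕ} {u u' : List A}

theorem KAbelianEq.isPrefix_iff (h : KAbelianEq k u u') {x : List A} (hx : x.length < k) :
    x <+: u ↔ x <+: u' := by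
  rcases eq_or_ne x [] with rfl | hx0
  · simp
  have hcount := occ_eq_sum_occ_cons_add x (T := (u ++ u').toFinset) u (by simp_all)
  have hcount' := occ_eq_sum_occ_cons_add x (T := (u ++ u').toFinset) u' (by simp_all)
  rw [h x hx0 hx.le, sum_congr rfl fun a _ => h (a :: x) (List.cons_ne_nil a x)
    (by simpa using hx)] at hcount
  have : (if x <+: u then 1 else 0) = (if x <+: u' then 1 else 0) := by omega
  split_ifs at this <;> simp_all

theorem KAbelianEq.take_eq (h : KAbelianEq k u u') {j : ℕ} (hj : j < k) :
    u.take j = u'.take j := by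
  have h₁ : u.take j <+: u'.take j := List.prefix_take_iff.2
    ⟨(h.isPrefix_iff ((List.length_take_le _ _).trans_lt hj)).1 (List.take_prefix j u),
      List.length_take_le j u⟩
  have h₂ : u'.take j <+: u.take j := List.prefix_take_iff.2
    ⟨(h.isPrefix_iff ((List.length_take_le _ _).trans_lt hj)).2 (List.take_prefix j u'),
      List.length_take_le j u'⟩
  exact h₁.eq_of_length (le_antisymm h₁.length_le h₂.length_le)

theorem KAbelianEq.reverse (h : KAbelianEq k u u') : KAbelianEq k u.reverse u'.reverse := by
  intro w hw hwk
  rw [← List.reverse_reverse w, occ_reverse, occ_reverse]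
  exact h w.reverse (by simpa) (by simpa)

theorem KAbelianEq.rtake_eq (h : KAbelianEq k u u') {j : ℕ} (hj : j < k) :
    u.rtake j = u'.rtake j := by
  rw [List.rtake_eq_reverse_take_reverse, List.rtake_eq_reverse_take_reverse,
    h.reverse.take_eq hj]

end

theorem kabelian_congruence {A : Type*} [DecidableEq A] (k : ℕ)
    (u u' v v' : List A) (hu : KAbelianEq k u u') (hv : KAbelianEq k v v') :
    KAbelianEq k (u ++ v) (u' ++ v') := by
  intro w hw hwk
  have hm : w.length - 1 < k := by
    have := List.length_pos_iff.2 hw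
    omega
  rw [occ_append hw u v, occ_append hw u' v', hu w hw hwk, hv w hw hwk, hu.rtake_eq hm,
    hv.take_eq hm]
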